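/- arXiv:2506.13135 — 2 statements merged into one kernel-verified Lean document; each statement's English description precedes it below -/
import Mathlib

section
/- Let n ≥ 1 and let u : ℝⁿ → ℝⁿ be continuous. Suppose that for all smooth compactly supported f, g : ℝⁿ → ℝ, ∫_{ℝⁿ} ⟨u(x), g(x)∇f(x) − f(x)∇g(x)⟩ dx = 0. Then u(x) = 0 for every x ∈ ℝⁿ. -/
/-!
Choosing `g` equal to `1` near the support of `f` kills the term `f ∇g`, so `u` is divergence
free in the weak sense: `∫ ⟨u, ∇f⟩ = 0`. Applied to `f g`, the Leibniz rule makes this the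
symmetric counterpart `∫ ⟨u, g ∇f + f ∇g⟩ = 0` of the hypothesis, hence `∫ f ⟨u, ∇g⟩ = 0` for
all test functions `f`, and the continuous function `⟨u, ∇g⟩` vanishes identically. Near any
point `x₀` a test function `g` can agree with the coordinate `x ↦ x i`, and then
`⟨u(x₀), ∇g(x₀)⟩ = u(x₀) i`.
-/

open MeasureTheory Matrix

/-- The gradient of a scalar function on `ℝⁿ`, given by the partial derivatives. -/
noncomputable def grad {n : ℕ} (f : (Fin n → ℝ) → ℝ) (x : Fin n → ℝ) : Fin n → ℝ :=
  fun i => fderiv ℝ f x (Pi.single i 1)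

open Filter Topology

section Grad

variable {n : ℕ} {f g : (Fin n → ℝ) → ℝ} {x : Fin n → ℝ}

theorem continuous_grad (hf : ContDiff ℝ 1 f) : Continuous (grad f) :=
  continuous_pi fun _ ↦ (hf.continuous_fderiv one_ne_zero).clm_apply continuous_const

theorem grad_of_notMem_tsupport (hx : x ∉ tsupport f) : grad f x = 0 := by
  funext i
  simp [grad, fderiv_of_notMem_tsupport ℝ hx]

theorem Filter.EventuallyEq.grad_eq (h : f =ᶠ[𝓝 x] g) : grad f x = grad g x := by
  funext i
  simp [grad, h.fderiv_eq]

theorem grad_const (c : ℝ) : grad (fun _ : Fin n → ℝ ↦ c) x = 0 := by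
  funext i
  simp [grad]

theorem grad_coord (i : Fin n) : grad (fun y : Fin n → ℝ ↦ y i) x = Pi.single i 1 := by
  funext j
  have hproj : fderiv ℝ (fun y : Fin n → ℝ ↦ y i) x = ContinuousLinearMap.proj (R := ℝ) i :=
    (ContinuousLinearMap.proj (R := ℝ) (φ := fun _ : Fin n ↦ ℝ) i).fderiv
  simp [grad, hproj, Pi.single_apply, eq_comm]

theorem grad_mul (hf : DifferentiableAt ℝ f x) (hg : DifferentiableAt ℝ g x) :
    grad (fun y ↦ f y * g y) x = g x • grad f x + f x • grad g x := by
  funext i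
  simp only [grad, fderiv_fun_mul hf hg, _root_.add_apply,
    _root_.smul_apply, Pi.add_apply, Pi.smul_apply, smul_eq_mul]
  ring

end Grad

theorem Continuous.eq_zero_of_integral_contDiff_mul_eq_zero {E : Type*} [NormedAddCommGroup E]
    [NormedSpace ℝ E] [FiniteDimensional ℝ E] [MeasurableSpace E] [BorelSpace E] {μ : Measure E}
    [IsLocallyFiniteMeasure μ] [μ.IsOpenPosMeasure] {v : E → ℝ} (hv : Continuous v)
    (h : ∀ f : E → ℝ, ContDiff ℝ (⊤ : ℕ∞) f → HasCompactSupport f → ∫ x, f x * v x ∂μ = 0) :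
    v = 0 :=
  μ.eq_of_ae_eq (ae_eq_zero_of_integral_contDiff_smul_eq_zero hv.locallyIntegrable h) hv
    continuous_const

section WeakCurrent

variable {n : ℕ} {u : (Fin n → ℝ) → (Fin n → ℝ)}

theorem integral_dotProduct_grad_eq_zero
    (h : ∀ f g : (Fin n → ℝ) → ℝ,
      ContDiff ℝ (⊤ : ℕ∞) f → HasCompactSupport f →
      ContDiff ℝ (⊤ : ℕ∞) g → HasCompactSupport g →
      ∫ x, u x ⬝ᵥ (g x • grad f x - f x • grad g x) = 0)
    {f : (Fin n → ℝ) → ℝ} (hf : ContDiff ℝ (⊤ : ℕ∞) f) (hfc : HasCompactSupport f) :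
    ∫ x, u x ⬝ᵥ grad f x = 0 := by
  obtain ⟨R, hR⟩ := hfc.isBounded.subset_ball (0 : Fin n → ℝ)
  let φ : ContDiffBump (0 : Fin n → ℝ) := ⟨max R 1, max R 1 + 1, by positivity, by linarith⟩
  have hsupp : tsupport f ⊆ Metric.ball 0 φ.rIn :=
    hR.trans (Metric.ball_subset_ball (le_max_left R 1))
  have hcut : ∀ x, u x ⬝ᵥ (φ x • grad f x - f x • grad (fun y ↦ φ y) x) = u x ⬝ᵥ grad f x := by
    intro x
    by_cases hx : x ∈ Metric.ball 0 φ.rIn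
    · have hφ : (fun y ↦ φ y) =ᶠ[𝓝 x] fun _ ↦ 1 := φ.eventuallyEq_one_of_mem_ball hx
      rw [hφ.eq_of_nhds, hφ.grad_eq, grad_const]
      simp
    · have hx' : x ∉ tsupport f := fun hmem ↦ hx (hsupp hmem)
      simp [image_eq_zero_of_notMem_tsupport hx', grad_of_notMem_tsupport hx']
  simpa only [hcut] using h f (fun x ↦ φ x) hf hfc φ.contDiff φ.hasCompactSupport

theorem dotProduct_grad_eq_zero (hu : Continuous u)
    (h : ∀ f g : (Fin n → ℝ) → ℝ,
      ContDiff ℝ (⊤ : ℕ∞) f → HasCompactSupport f →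
      ContDiff ℝ (⊤ : ℕ∞) g → HasCompactSupport g →
      ∫ x, u x ⬝ᵥ (g x • grad f x - f x • grad g x) = 0)
    {g : (Fin n → ℝ) → ℝ} (hg : ContDiff ℝ (⊤ : ℕ∞) g) (hgc : HasCompactSupport g) :
    (fun x ↦ u x ⬝ᵥ grad g x) = 0 := by
  have hcont {φ : (Fin n → ℝ) → ℝ} (hφ : ContDiff ℝ (⊤ : ℕ∞) φ) :
      Continuous fun x ↦ u x ⬝ᵥ grad φ x :=
    hu.dotProduct (continuous_grad (hφ.of_le (by simp)))
  refine (hcont hg).eq_zero_of_integral_contDiff_mul_eq_zero (μ := volume) fun f hf hfc ↦ ?_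
  set A : (Fin n → ℝ) → ℝ := fun x ↦ g x * (u x ⬝ᵥ grad f x)
  set B : (Fin n → ℝ) → ℝ := fun x ↦ f x * (u x ⬝ᵥ grad g x)
  have hA : Integrable A :=
    (hg.continuous.mul (hcont hf)).integrable_of_hasCompactSupport hgc.mul_right
  have hB : Integrable B :=
    (hf.continuous.mul (hcont hg)).integrable_of_hasCompactSupport hfc.mul_right
  have hsum : ∫ x, A x + B x = 0 := by
    have hfg := integral_dotProduct_grad_eq_zero h (hf.mul hg) hfc.mul_right
    simpa only [grad_mul (hf.differentiable (by simp) _) (hg.differentiable (by simp) _),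
      dotProduct_add, dotProduct_smul, smul_eq_mul] using hfg
  have hdiff : ∫ x, A x - B x = 0 := by
    simpa only [dotProduct_sub, dotProduct_smul, smul_eq_mul] using h f g hf hfc hg hgc
  rw [integral_add hA hB] at hsum
  rw [integral_sub hA hB] at hdiff
  linarith

end WeakCurrent

theorem eq_zero_of_forall_dotProduct_grad_eq_zero {n : ℕ} {v x₀ : Fin n → ℝ}
    (h : ∀ g : (Fin n → ℝ) → ℝ, ContDiff ℝ (⊤ : ℕ∞) g → HasCompactSupport g →
      v ⬝ᵥ grad g x₀ = 0) :
    v = 0 := by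
  funext i
  let φ : ContDiffBump x₀ := ⟨1, 2, one_pos, one_lt_two⟩
  have hcoord : (fun y ↦ y i * φ y) =ᶠ[𝓝 x₀] fun y ↦ y i :=
    φ.eventuallyEq_one.mono fun y hy ↦ by simp [hy]
  have hv := h _ ((contDiff_apply ℝ ℝ i).mul φ.contDiff) φ.hasCompactSupport.mul_left
  rwa [hcoord.grad_eq, grad_coord, dotProduct_single, mul_one] at hv

theorem stmt_7_general (n : ℕ)
    (u : (Fin n → ℝ) → (Fin n → ℝ)) (hu : Continuous u)
    (h : ∀ f g : (Fin n → ℝ) → ℝ,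
      ContDiff ℝ (⊤ : ℕ∞) f → HasCompactSupport f →
      ContDiff ℝ (⊤ : ℕ∞) g → HasCompactSupport g →
      ∫ x, u x ⬝ᵥ (g x • grad f x - f x • grad g x) = 0) :
    ∀ x, u x = 0 := fun x ↦
  eq_zero_of_forall_dotProduct_grad_eq_zero fun _ hg hgc ↦
    congrFun (dotProduct_grad_eq_zero hu h hg hgc) x

theorem stmt_7 (n : ℕ) (hn : 1 ≤ n)
    (u : (Fin n → ℝ) → (Fin n → ℝ)) (hu : Continuous u)
    (h : ∀ f g : (Fin n → ℝ) → ℝ,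
      ContDiff ℝ (⊤ : ℕ∞) f → HasCompactSupport f →
      ContDiff ℝ (⊤ : ℕ∞) g → HasCompactSupport g →
      ∫ x, u x ⬝ᵥ (g x • grad f x - f x • grad g x) = 0) :
    ∀ x, u x = 0 :=
  stmt_7_general n u hu h
end

section
/- Let n ≥ 1, β > 0 and T > 0. Let ρ : [0,T] × ℝⁿ → (0,∞) be such that t ↦ ρ(t,x) is differentiable for every x and x ↦ ρ(t,x) is twice continuously differentiable for every t; let b : ℝⁿ → ℝⁿ be continuously differentiable, A : ℝⁿ → ℝ^{n×n} continuously differentiable, and k : ℝⁿ × ℝⁿ → [0,∞) measurable such that for all t and x the functions y ↦ k(y,x)ρ(t,y) and y ↦ k(x,y) are integrable on ℝⁿ. Suppose ρ solves the nonlocal Fokker–Planck equation: ∂_t ρ(t,x) = ∇·(−bρ(t,·) + β⁻¹A∇ρ(t,·))(x) + ∫_{ℝⁿ}(k(y,x)ρ(t,y) − k(x,y)ρ(t,x)) dy for all t ∈ [0,T] and x ∈ ℝⁿ. Define ρ^R(t,x) := ρ(T−t,x), b^R_t(x) := −b(x) + 2β⁻¹A(x)∇_x log ρ(T−t,x), and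 k^R_t(x,y) := ρ(T−t,y)k(y,x)/ρ(T−t,x). Then for all t ∈ [0,T] and x ∈ ℝⁿ, ∂_t ρ^R(t,x) = ∇·(−b^R_t ρ^R(t,·) + β⁻¹A∇ρ^R(t,·))(x) + ∫_{ℝⁿ}(k^R_t(y,x)ρ^R(t,y) − k^R_t(x,y)ρ^R(t,x)) dy. -/
open MeasureTheory Matrix

/-- The divergence of a vector field on `ℝⁿ`. -/
noncomputable def dive {n : ℕ} (v : (Fin n → ℝ) → (Fin n → ℝ)) (x : Fin n → ℝ) : ℝ :=
  ∑ i, fderiv ℝ (fun y => v y i) x (Pi.single i 1)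

lemma dive_neg {n : ℕ} (v : (Fin n → ℝ) → (Fin n → ℝ)) (x : Fin n → ℝ) :
    dive (fun y => -(v y)) x = -dive v x := by
  simp [dive, fderiv_neg, ← Finset.sum_neg_distrib]

lemma grad_log {n : ℕ} {f : (Fin n → ℝ) → ℝ} {x : Fin n → ℝ}
    (hf : DifferentiableAt ℝ f x) (hfx : f x ≠ 0) :
    grad (fun y => Real.log (f y)) x = (f x)⁻¹ • grad f x := by
  have h := ((Real.hasDerivAt_log hfx).comp_hasFDerivAt x hf.hasFDerivAt).fderiv
  funext i
  simp only [grad, Pi.smul_apply, smul_eq_mul]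
  rw [show (fun y => Real.log (f y)) = Real.log ∘ f from rfl, h]
  simp

theorem stmt_14 (n : ℕ) (hn : 1 ≤ n) (β T : ℝ) (hβ : 0 < β) (hT : 0 < T)
    (ρ : ℝ → (Fin n → ℝ) → ℝ) (hρpos : ∀ t x, 0 < ρ t x)
    (hρt : ∀ x, ∀ t ∈ Set.Icc (0 : ℝ) T, DifferentiableAt ℝ (fun s => ρ s x) t)
    (hρx : ∀ t, ContDiff ℝ 2 (ρ t))
    (b : (Fin n → ℝ) → (Fin n → ℝ)) (hb : ContDiff ℝ 1 b)
    (A : (Fin n → ℝ) → Matrix (Fin n) (Fin n) ℝ)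
    (hA : ∀ i j, ContDiff ℝ 1 fun x => A x i j)
    (k : (Fin n → ℝ) → (Fin n → ℝ) → ℝ)
    (hkmeas : Measurable fun p : (Fin n → ℝ) × (Fin n → ℝ) => k p.1 p.2)
    (hknonneg : ∀ x y, 0 ≤ k x y)
    (hkint1 : ∀ t x, Integrable fun y => k y x * ρ t y)
    (hkint2 : ∀ x, Integrable fun y => k x y)
    (hFP : ∀ t ∈ Set.Icc (0 : ℝ) T, ∀ x,
      deriv (fun s => ρ s x) t =
        dive (fun y => -(ρ t y • b y) + β⁻¹ • ((A y) *ᵥ grad (ρ t) y)) x +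
          ∫ y, (k y x * ρ t y - k x y * ρ t x))
    (ρR : ℝ → (Fin n → ℝ) → ℝ) (hρR : ∀ t x, ρR t x = ρ (T - t) x)
    (bR : ℝ → (Fin n → ℝ) → (Fin n → ℝ))
    (hbR : ∀ t x, bR t x =
      -b x + (2 * β⁻¹) • ((A x) *ᵥ grad (fun y => Real.log (ρ (T - t) y)) x))
    (kR : ℝ → (Fin n → ℝ) → (Fin n → ℝ) → ℝ)
    (hkR : ∀ t x y, kR t x y = ρ (T - t) y * k y x / ρ (T - t) x) :
    ∀ t ∈ Set.Icc (0 : ℝ) T, ∀ x,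
      deriv (fun s => ρR s x) t =
        dive (fun y => -(ρR t y • bR t y) + β⁻¹ • ((A y) *ᵥ grad (ρR t) y)) x +
          ∫ y, (kR t y x * ρR t y - kR t x y * ρR t x) := by
  intro t ht x
  have hTt : T - t ∈ Set.Icc (0 : ℝ) T := ⟨by linarith [ht.2], by linarith [ht.1]⟩
  have hρRfun : ∀ s, ρR s = ρ (T - s) := fun s => funext (hρR s)
  -- Left-hand side
  have hL : deriv (fun s => ρR s x) t = -deriv (fun s => ρ s x) (T - t) := by
    rw [show (fun s => ρR s x) = fun s => ρ (T - s) x from funext fun s => hρR s x]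
    exact deriv_comp_const_sub (fun u => ρ u x) T t
  -- Vector field equality
  have hveq : (fun y => -(ρR t y • bR t y) + β⁻¹ • ((A y) *ᵥ grad (ρR t) y)) =
      fun y => -(-(ρ (T - t) y • b y) + β⁻¹ • ((A y) *ᵥ grad (ρ (T - t)) y)) := by
    funext y
    have hρy := hρpos (T - t) y
    have hgl : grad (fun z => Real.log (ρ (T - t) z)) y
        = (ρ (T - t) y)⁻¹ • grad (ρ (T - t)) y :=
      grad_log (((hρx (T - t)).differentiable (by norm_num)) y) hρy.ne'
    rw [hρR, hbR, hgl, hρRfun]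
    rw [Matrix.mulVec_smul]
    funext i
    simp only [Pi.add_apply, Pi.neg_apply, Pi.smul_apply, smul_eq_mul, neg_add_rev, neg_neg]
    field_simp
    ring
  -- integrand equality
  have hint : (∫ y, (kR t y x * ρR t y - kR t x y * ρR t x))
      = -∫ y, (k y x * ρ (T - t) y - k x y * ρ (T - t) x) := by
    rw [← integral_neg]
    congr 1
    funext y
    rw [hkR, hkR, hρR, hρR]
    have h1 := (hρpos (T - t) x).ne'
    have h2 := (hρpos (T - t) y).ne'
    field_simp
    ring
  rw [hL, hveq, dive_neg, hint, hFP (T - t) hTt x]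
  ring
end
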